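/- Let ξ ∈ C²(S¹;ℝ^d) solve ∂_s(σ∂_sξ) + ξ = 0 with |∂_s ξ| ≡ 1. Then: (a) ∫₀¹ σ ds = ∫₀¹ |ξ|² ds; (b) σ(s) + (1/2)|ξ(s)|² = (3/2) σ̄ for all s, where σ̄ = ∫₀¹ σ ds; (c) τ := σ² satisfies the first integral (1/2)(∂_s τ)² + V(τ) = λ with V(τ) = 4τ^{3/2} − 6 τ̄ τ, τ̄ = ∫₀¹ τ^{1/2} ds, and λ = V(τ_e) at any extreme value τ_e of τ; moreover λ ∈ [−2τ̄³, 0). -/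

import Mathlib

/-!
Pairing `(σ ξ')' = -ξ` with `ξ'`, and using `⟪ξ', ξ''⟫ = 0` (from `‖ξ'‖ = 1`), gives
`σ' = -⟪ξ, ξ'⟫`, so `σ + ‖ξ‖²/2` is constant; pairing it with `ξ` gives
`(⟪σ ξ', ξ⟫)' = σ - ‖ξ‖²`, whose integral over a period vanishes. This is (a), and (b) follows by
integrating the constant. Splitting `-ξ = σ' ξ' + σ ξ''` orthogonally gives `‖ξ‖² = σ'² + σ²k²`
with `k = ‖ξ''‖`, and differentiating `σ' = -⟪ξ, ξ'⟫` once more gives `σ'' = σk² - 1`. With (b),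
these make `(τ')²/2 + V(τ) = 2σ²σ'² + 4σ³ - 6σ̄σ²` constant. At a minimum `m` of `σ` we have
`σ' = 0`, so `λ = 2m²(2m - 3σ̄) < 0` as `0 < m ≤ σ̄`, and `λ + 2σ̄³ = 2(m - σ̄)²(2m + σ̄) ≥ 0`.
-/

open Real MeasureTheory intervalIntegral

noncomputable section

open Function
open scoped RealInnerProductSpace

theorem Function.Periodic.deriv {F : Type*} [NormedAddCommGroup F] [NormedSpace ℝ F]
    {f : ℝ → F} {c : ℝ} (hf : Periodic f c) : Periodic (deriv f) c := fun x => by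
  rw [← deriv_comp_add_const, hf.funext]

theorem Function.Periodic.exists_forall_le {α : Type*} [TopologicalSpace α] [LinearOrder α]
    [ClosedIicTopology α] {f : ℝ → α} {c : ℝ} (hf : Periodic f c) (hc : c ≠ 0)
    (hcont : Continuous f) : ∃ x, ∀ y, f x ≤ f y := by
  obtain ⟨_, ⟨x, rfl⟩, hx⟩ :=
    (hf.compact_of_continuous hc hcont).exists_isLeast (Set.range_nonempty f)
  exact ⟨x, fun y => hx ⟨y, rfl⟩⟩

theorem HasDerivAt.inner_eq_zero_of_forall_norm_eq {E : Type*} [NormedAddCommGroup E]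
    [InnerProductSpace ℝ E] {f : ℝ → E} {f' : E} {x c : ℝ} (hf : HasDerivAt f f' x)
    (hc : ∀ y, ‖f y‖ = c) : ⟪f x, f'⟫ = 0 := by
  have h := hf.norm_sq
  simp only [hc] at h
  linarith [h.unique (hasDerivAt_const x (c ^ 2))]

/-- The potential `V(τ) = 4τ^{3/2} - 6Aτ` of the first integral, in the variable `x = √τ`. -/
def potential (A x : ℝ) : ℝ := 4 * x ^ 3 - 6 * A * x ^ 2

theorem potential_neg {A x : ℝ} (hx : x ≠ 0) (hxA : 2 * x < 3 * A) : potential A x < 0 := by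
  have hfactor : potential A x = 2 * x ^ 2 * (2 * x - 3 * A) := by unfold potential; ring
  rw [hfactor]
  exact mul_neg_of_pos_of_neg (by positivity) (by linarith)

theorem neg_two_mul_pow_three_le_potential {A x : ℝ} (h : 0 ≤ 2 * x + A) :
    -2 * A ^ 3 ≤ potential A x := by
  have hfactor : potential A x + 2 * A ^ 3 = 2 * (x - A) ^ 2 * (2 * x + A) := by
    unfold potential; ring
  nlinarith [mul_nonneg (sq_nonneg (x - A)) h]

theorem hasDerivAt_energy {σ : ℝ → ℝ} {A κ s : ℝ} (hσ : DifferentiableAt ℝ σ s)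
    (hσ' : DifferentiableAt ℝ (deriv σ) s) (hdd : deriv (deriv σ) s = σ s * κ - 1)
    (hnorm : deriv σ s ^ 2 + σ s ^ 2 * κ = 3 * A - 2 * σ s) :
    HasDerivAt (fun t => 2 * σ t ^ 2 * deriv σ t ^ 2 + potential A (σ t)) 0 s := by
  have h := (((hσ.hasDerivAt.pow 2).const_mul 2).mul (hσ'.hasDerivAt.pow 2)).add
    (((hσ.hasDerivAt.pow 3).const_mul 4).sub ((hσ.hasDerivAt.pow 2).const_mul (6 * A)))
  refine h.congr_deriv ?_
  simp only [Pi.pow_apply, Nat.cast_ofNat]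
  linear_combination (4 * σ s ^ 2 * deriv σ s) * hdd + (4 * σ s * deriv σ s) * hnorm

variable {E : Type*} [NormedAddCommGroup E] [InnerProductSpace ℝ E]

/-- `σ` is the Lagrange multiplier of the constraint `‖ξ'‖ = 1`; `mult` in names refers to it. -/
structure IsStationaryCurve (ξ : ℝ → E) (σ : ℝ → ℝ) : Prop where
  contDiff : ContDiff ℝ 2 ξ
  contDiff_mult : ContDiff ℝ 2 σ
  norm_deriv : ∀ s, ‖deriv ξ s‖ = 1
  deriv_smul_deriv_add : ∀ s, deriv (fun r => σ r • deriv ξ r) s + ξ s = 0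

namespace IsStationaryCurve

variable {ξ : ℝ → E} {σ : ℝ → ℝ}

theorem differentiable (h : IsStationaryCurve ξ σ) : Differentiable ℝ ξ :=
  h.contDiff.differentiable two_ne_zero

theorem differentiable_deriv (h : IsStationaryCurve ξ σ) : Differentiable ℝ (deriv ξ) :=
  h.contDiff.differentiable_deriv_two

theorem differentiable_mult (h : IsStationaryCurve ξ σ) : Differentiable ℝ σ :=
  h.contDiff_mult.differentiable two_ne_zero

theorem differentiable_deriv_mult (h : IsStationaryCurve ξ σ) : Differentiable ℝ (deriv σ) :=
  h.contDiff_mult.differentiable_deriv_two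

theorem intervalIntegrable_mult (h : IsStationaryCurve ξ σ) (a b : ℝ) :
    IntervalIntegrable σ volume a b :=
  h.differentiable_mult.continuous.intervalIntegrable a b

theorem intervalIntegrable_norm_sq (h : IsStationaryCurve ξ σ) (a b : ℝ) :
    IntervalIntegrable (fun s => ‖ξ s‖ ^ 2) volume a b :=
  (h.differentiable.continuous.norm.pow 2).intervalIntegrable a b

theorem hasDerivAt_smul_deriv (h : IsStationaryCurve ξ σ) (s : ℝ) :
    HasDerivAt (fun r => σ r • deriv ξ r) (-ξ s) s := by
  have hd : DifferentiableAt ℝ (fun r => σ r • deriv ξ r) s :=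
    (h.differentiable_mult s).smul (h.differentiable_deriv s)
  rw [← eq_neg_of_add_eq_zero_left (h.deriv_smul_deriv_add s)]
  exact hd.hasDerivAt

theorem smul_deriv_deriv_add (h : IsStationaryCurve ξ σ) (s : ℝ) :
    σ s • deriv (deriv ξ) s + deriv σ s • deriv ξ s = -ξ s :=
  ((h.differentiable_mult s).hasDerivAt.smul (h.differentiable_deriv s).hasDerivAt).unique
    (h.hasDerivAt_smul_deriv s)

theorem inner_deriv_deriv_deriv (h : IsStationaryCurve ξ σ) (s : ℝ) :
    ⟪deriv ξ s, deriv (deriv ξ) s⟫ = 0 :=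
  (h.differentiable_deriv s).hasDerivAt.inner_eq_zero_of_forall_norm_eq h.norm_deriv

theorem deriv_mult (h : IsStationaryCurve ξ σ) (s : ℝ) : deriv σ s = -⟪ξ s, deriv ξ s⟫ := by
  have hpair := congrArg (fun v => ⟪v, deriv ξ s⟫) (h.smul_deriv_deriv_add s)
  rw [inner_add_left, inner_neg_left, real_inner_smul_left, real_inner_smul_left,
    real_inner_self_eq_norm_sq, h.norm_deriv, real_inner_comm (deriv ξ s),
    h.inner_deriv_deriv_deriv] at hpair
  linarith

theorem norm_sq_eq (h : IsStationaryCurve ξ σ) (s : ℝ) :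
    ‖ξ s‖ ^ 2 = deriv σ s ^ 2 + σ s ^ 2 * ‖deriv (deriv ξ) s‖ ^ 2 := by
  rw [← norm_neg, ← h.smul_deriv_deriv_add s, add_comm, norm_add_sq_real, norm_smul, norm_smul,
    real_inner_smul_left, real_inner_smul_right, h.inner_deriv_deriv_deriv, h.norm_deriv]
  simp only [Real.norm_eq_abs, mul_pow, sq_abs]
  ring

theorem deriv_deriv_mult (h : IsStationaryCurve ξ σ) (s : ℝ) :
    deriv (deriv σ) s = σ s * ‖deriv (deriv ξ) s‖ ^ 2 - 1 := by
  have hd : HasDerivAt (deriv σ)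
      (-(⟪ξ s, deriv (deriv ξ) s⟫ + ⟪deriv ξ s, deriv ξ s⟫)) s := by
    rw [funext h.deriv_mult]
    exact ((h.differentiable s).hasDerivAt.inner ℝ (h.differentiable_deriv s).hasDerivAt).neg
  have hpair := congrArg (fun v => ⟪v, deriv (deriv ξ) s⟫) (h.smul_deriv_deriv_add s)
  rw [inner_add_left, inner_neg_left, real_inner_smul_left, real_inner_smul_left,
    real_inner_self_eq_norm_sq, h.inner_deriv_deriv_deriv] at hpair
  rw [hd.deriv, real_inner_self_eq_norm_sq, h.norm_deriv]
  linarith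

theorem mult_add_half_norm_sq_eq (h : IsStationaryCurve ξ σ) (s t : ℝ) :
    σ s + 1 / 2 * ‖ξ s‖ ^ 2 = σ t + 1 / 2 * ‖ξ t‖ ^ 2 := by
  have hd : ∀ x, HasDerivAt (fun r => σ r + 1 / 2 * ‖ξ r‖ ^ 2) 0 x := fun x => by
    refine ((h.differentiable_mult x).hasDerivAt.add
      (((h.differentiable x).hasDerivAt.norm_sq).const_mul (1 / 2))).congr_deriv ?_
    rw [h.deriv_mult]
    ring
  exact is_const_of_deriv_eq_zero (fun x => (hd x).differentiableAt) (fun x => (hd x).deriv) s t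

theorem periodic_mult (h : IsStationaryCurve ξ σ) {c : ℝ} (hper : Periodic ξ c) :
    Periodic σ c := fun s => by
  have hconst := h.mult_add_half_norm_sq_eq (s + c) s
  rw [hper s] at hconst
  linarith

theorem hasDerivAt_inner_smul_deriv (h : IsStationaryCurve ξ σ) (s : ℝ) :
    HasDerivAt (fun t => ⟪σ t • deriv ξ t, ξ t⟫) (σ s - ‖ξ s‖ ^ 2) s := by
  refine ((h.hasDerivAt_smul_deriv s).inner ℝ (h.differentiable s).hasDerivAt).congr_deriv ?_
  rw [inner_neg_left, real_inner_self_eq_norm_sq, real_inner_smul_left,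
    real_inner_self_eq_norm_sq, h.norm_deriv]
  ring

theorem integral_mult_eq (h : IsStationaryCurve ξ σ) (hper : Periodic ξ 1) :
    ∫ s in (0 : ℝ)..1, σ s = ∫ s in (0 : ℝ)..1, ‖ξ s‖ ^ 2 := by
  have hzero : ∫ s in (0 : ℝ)..1, (σ s - ‖ξ s‖ ^ 2) = 0 := by
    rw [integral_eq_sub_of_hasDerivAt (fun s _ => h.hasDerivAt_inner_smul_deriv s)
      ((h.intervalIntegrable_mult 0 1).sub (h.intervalIntegrable_norm_sq 0 1))]
    have hσ1 : σ 1 = σ 0 := by simpa using h.periodic_mult hper 0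
    have hξ1 : ξ 1 = ξ 0 := by simpa using hper 0
    have hξ'1 : deriv ξ 1 = deriv ξ 0 := by simpa using hper.deriv 0
    rw [hσ1, hξ1, hξ'1, sub_self]
  rwa [integral_sub (h.intervalIntegrable_mult 0 1) (h.intervalIntegrable_norm_sq 0 1),
    sub_eq_zero] at hzero

theorem mult_add_half_norm_sq_eq_integral (h : IsStationaryCurve ξ σ) (hper : Periodic ξ 1)
    (s : ℝ) : σ s + 1 / 2 * ‖ξ s‖ ^ 2 = 3 / 2 * ∫ r in (0 : ℝ)..1, σ r := by
  calc σ s + 1 / 2 * ‖ξ s‖ ^ 2 = ∫ r in (0 : ℝ)..1, (σ r + 1 / 2 * ‖ξ r‖ ^ 2) := by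
        rw [integral_congr (g := fun _ => σ s + 1 / 2 * ‖ξ s‖ ^ 2)
          fun r _ => h.mult_add_half_norm_sq_eq r s]
        simp
    _ = (∫ r in (0 : ℝ)..1, σ r) + 1 / 2 * ∫ r in (0 : ℝ)..1, ‖ξ r‖ ^ 2 := by
        rw [integral_add (h.intervalIntegrable_mult 0 1)
          ((h.intervalIntegrable_norm_sq 0 1).const_mul _), intervalIntegral.integral_const_mul]
    _ = 3 / 2 * ∫ r in (0 : ℝ)..1, σ r := by
        rw [← h.integral_mult_eq hper]
        ring

theorem energy_eq (h : IsStationaryCurve ξ σ) (hper : Periodic ξ 1) (s t : ℝ) :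
    2 * σ s ^ 2 * deriv σ s ^ 2 + potential (∫ r in (0 : ℝ)..1, σ r) (σ s) =
      2 * σ t ^ 2 * deriv σ t ^ 2 + potential (∫ r in (0 : ℝ)..1, σ r) (σ t) := by
  have hd : ∀ x, HasDerivAt (fun r => 2 * σ r ^ 2 * deriv σ r ^ 2 +
      potential (∫ r in (0 : ℝ)..1, σ r) (σ r)) 0 x := fun x =>
    hasDerivAt_energy (h.differentiable_mult x) (h.differentiable_deriv_mult x)
      (h.deriv_deriv_mult x)
      (by linarith [h.norm_sq_eq x, h.mult_add_half_norm_sq_eq_integral hper x])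
  exact is_const_of_deriv_eq_zero (fun x => (hd x).differentiableAt) (fun x => (hd x).deriv) s t

end IsStationaryCurve

theorem stmt14_general (d : ℕ)
    (ξ : ℝ → EuclideanSpace ℝ (Fin d)) (σ : ℝ → ℝ)
    (hξ : ContDiff ℝ 2 ξ) (hσ : ContDiff ℝ 2 σ)
    (hperξ : Function.Periodic ξ 1)
    (hσpos : ∀ s, 0 < σ s)
    (hspeed : ∀ s, ‖deriv ξ s‖ = 1)
    (hstat : ∀ s, deriv (fun r => σ r • deriv ξ r) s + ξ s = 0) :
    ((∫ s in (0:ℝ)..1, σ s) = ∫ s in (0:ℝ)..1, ‖ξ s‖ ^ 2) ∧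
    (∀ s, σ s + (1/2) * ‖ξ s‖ ^ 2 = (3/2) * ∫ r in (0:ℝ)..1, σ r) ∧
    (∃ lam : ℝ, lam ∈ Set.Ico (-2 * (∫ r in (0:ℝ)..1, σ r) ^ 3) 0 ∧
      ∀ s, (1/2) * (deriv (fun r => σ r ^ 2) s) ^ 2
          + (4 * (σ s ^ 2) ^ ((3:ℝ)/2) - 6 * (∫ r in (0:ℝ)..1, σ r) * σ s ^ 2)
        = lam) := by
  have h : IsStationaryCurve ξ σ := ⟨hξ, hσ, hspeed, hstat⟩
  obtain ⟨m, hm⟩ := (h.periodic_mult hperξ).exists_forall_le one_ne_zero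
    h.differentiable_mult.continuous
  have hmA : σ m ≤ ∫ r in (0 : ℝ)..1, σ r := by
    simpa using integral_mono_on zero_le_one (intervalIntegrable_const (μ := volume))
      (h.intervalIntegrable_mult 0 1) fun r _ => hm r
  have hσ'm : deriv σ m = 0 := IsLocalMin.deriv_eq_zero (Filter.Eventually.of_forall hm)
  refine ⟨h.integral_mult_eq hperξ, h.mult_add_half_norm_sq_eq_integral hperξ,
    potential (∫ r in (0 : ℝ)..1, σ r) (σ m),
    ⟨neg_two_mul_pow_three_le_potential (by linarith [hσpos m]),
      potential_neg (hσpos m).ne' (by linarith [hσpos m])⟩, fun s => ?_⟩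
  have hτ' : deriv (fun r => σ r ^ 2) s = 2 * σ s * deriv σ s := by
    simp [h.differentiable_mult s]
  have hτ : (σ s ^ 2) ^ ((3 : ℝ) / 2) = σ s ^ 3 := by
    rw [← rpow_natCast_mul (hσpos s).le]
    norm_num
  have hlam := h.energy_eq hperξ s m
  rw [hσ'm] at hlam
  rw [hτ', hτ]
  unfold potential at hlam ⊢
  linear_combination hlam

/-- For a stationary solution of the normalized flow:
(a) `∫σ = ∫|ξ|²`; (b) `σ + (1/2)|ξ|² = (3/2)σ̄`; (c) `τ = σ²` admits the first
integral `(1/2)(∂_s τ)² + 4τ^{3/2} - 6τ̄τ = λ` with `λ ∈ [-2τ̄³, 0)`. -/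
theorem stmt14 (d : ℕ)
    (ξ : ℝ → EuclideanSpace ℝ (Fin d)) (σ : ℝ → ℝ)
    (hξ : ContDiff ℝ 2 ξ) (hσ : ContDiff ℝ 2 σ)
    (hperξ : Function.Periodic ξ 1) (hperσ : Function.Periodic σ 1)
    (hσpos : ∀ s, 0 < σ s)
    (hspeed : ∀ s, ‖deriv ξ s‖ = 1)
    (hstat : ∀ s, deriv (fun r => σ r • deriv ξ r) s + ξ s = 0)
    (hmult : ∀ s, deriv (deriv σ) s - σ s * ‖deriv (deriv ξ) s‖ ^ 2 = -1) :
    ((∫ s in (0:ℝ)..1, σ s) = ∫ s in (0:ℝ)..1, ‖ξ s‖ ^ 2) ∧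
    (∀ s, σ s + (1/2) * ‖ξ s‖ ^ 2 = (3/2) * ∫ r in (0:ℝ)..1, σ r) ∧
    (∃ lam : ℝ, lam ∈ Set.Ico (-2 * (∫ r in (0:ℝ)..1, σ r) ^ 3) 0 ∧
      ∀ s, (1/2) * (deriv (fun r => σ r ^ 2) s) ^ 2
          + (4 * (σ s ^ 2) ^ ((3:ℝ)/2) - 6 * (∫ r in (0:ℝ)..1, σ r) * σ s ^ 2)
        = lam) :=
  stmt14_general d ξ σ hξ hσ hperξ hσpos hspeed hstat
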